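/- For integers d ≥ 3, i ≥ 2, and n ≥ 1.5(d+1): if there exists a d-decodable matrix with ⌈n/i⌉ columns and m₁ rows and a ⌊d/2⌋-decodable matrix with ⌈n/i⌉ columns and m₂ rows, then there exists a d-decodable matrix with n columns and at most m₁ + i·m₂ rows. In particular m*(n,d) ≤ min over 2 ≤ i ≤ ⌈n/2⌉ of [m*(⌈n/i⌉,d) + i·m*(⌈n/i⌉,⌊d/2⌋)]. -/

import Mathlib

/-- `M` is `d`-decodable: every nonempty set of at most `d` columns contains a
row of weight exactly one. -/
def IsDecodable {m n : ℕ} (M : Fin m → Fin n → Bool) (d : ℕ) : Prop :=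
  ∀ S : Finset (Fin n), S.Nonempty → S.card ≤ d →
    ∃ i : Fin m, (S.filter (fun j => M i j = true)).card = 1

/-- `m*(n,d)`: the minimum number of rows of a `d`-decodable binary matrix with
`n` columns. -/
noncomputable def mStar (n d : ℕ) : ℕ :=
  sInf {m | ∃ M : Fin m → Fin n → Bool, IsDecodable M d}

/-!
Split the `n` columns into `i` blocks of `q = ⌈n/i⌉` columns and stack the rows of `A`, read on
the position of a column inside its block, on top of `i` copies of `B`, the `b`-th copy supported
on the `b`-th block. A set `S` of at most `d` columns lying in one block is separated by a row of
`A`. Otherwise `S` meets two blocks, so one of them holds a nonempty part of `S` of size at most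
`|S| / 2 ≤ ⌊d/2⌋`, and the copy of `B` on that block separates that part, hence `S`.
-/

open Finset Function

def Isolates {α : Type*} (v : α → Bool) (S : Finset α) : Prop :=
  (S.filter fun a => v a = true).card = 1

lemma isolates_comp_iff {α β : Type*} [DecidableEq β] {v : β → Bool} {e : α → β}
    {S : Finset α} (he : Set.InjOn e S) :
    Isolates (v ∘ e) S ↔ Isolates v (S.image e) := by
  rw [Isolates, Isolates, filter_image, card_image_of_injOn (he.mono (filter_subset _ _))]
  rfl

lemma isolates_fiber_iff {α β : Type*} [DecidableEq β] {v : α → Bool} {f : α → β} {b : β}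
    {S : Finset α} :
    Isolates (fun a => decide (f a = b) && v a) S ↔ Isolates v (S.filter (f · = b)) := by
  simp only [Isolates, filter_filter, Bool.and_eq_true, decide_eq_true_eq]

lemma Finset.exists_fiber_nonempty_two_mul_card_le {α β : Type*} [DecidableEq β]
    {S : Finset α} {f : α → β} {a₁ a₂ : α} (h₁ : a₁ ∈ S) (h₂ : a₂ ∈ S) (hne : f a₁ ≠ f a₂) :
    ∃ b, (S.filter (f · = b)).Nonempty ∧ 2 * (S.filter (f · = b)).card ≤ S.card := by
  have hsum : (S.filter (f · = f a₁)).card + (S.filter (f · = f a₂)).card ≤ S.card := by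
    refine le_of_le_of_eq (Nat.add_le_add_left (card_le_card fun a ha => ?_) _)
      (card_filter_add_card_filter_not (f · = f a₁))
    rw [mem_filter] at ha ⊢
    exact ⟨ha.1, ha.2 ▸ hne.symm⟩
  rcases le_total (S.filter (f · = f a₁)).card (S.filter (f · = f a₂)).card with h | h
  · exact ⟨f a₁, ⟨a₁, mem_filter.2 ⟨h₁, rfl⟩⟩, by omega⟩
  · exact ⟨f a₂, ⟨a₂, mem_filter.2 ⟨h₂, rfl⟩⟩, by omega⟩

lemma IsDecodable.exists_isolates_comp {m q d : ℕ} {A : Fin m → Fin q → Bool}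
    (hA : IsDecodable A d) {α : Type*} {e : α → Fin q} {S : Finset α} (he : Set.InjOn e S)
    (hS : S.Nonempty) (hSd : S.card ≤ d) :
    ∃ r, Isolates (A r ∘ e) S := by
  obtain ⟨r, hr⟩ := hA (S.image e) (hS.image e) (card_image_le.trans hSd)
  exact ⟨r, (isolates_comp_iff he).2 hr⟩

lemma isDecodable_id (k d : ℕ) : IsDecodable (fun r j : Fin k => decide (r = j)) d := by
  rintro S ⟨j, hj⟩ -
  refine ⟨j, card_eq_one.2 ⟨j, ?_⟩⟩
  ext x
  simp only [mem_filter, decide_eq_true_eq, mem_singleton]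
  exact ⟨fun h => h.2.symm, fun h => ⟨h ▸ hj, h.symm⟩⟩

section Construction

variable {m₁ m₂ q n i d : ℕ} (A : Fin m₁ → Fin q → Bool) (B : Fin m₂ → Fin q → Bool)
  (e : Fin n → Fin i × Fin q)

/-- Column `j` sits at position `(e j).2` of block `(e j).1`; the row `inr (b, s)` is row `s`
of the copy of `B` on block `b`. -/
def stackRows : Fin m₁ ⊕ Fin i × Fin m₂ → Fin n → Bool
  | .inl r, j => A r (e j).2
  | .inr (b, s), j => decide ((e j).1 = b) && B s (e j).2

variable {A B e}

lemma injOn_snd_of_fst_eq (he : Injective e) (b : Fin i) :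
    Set.InjOn (fun j => (e j).2) {j | (e j).1 = b} :=
  fun _ h₁ _ h₂ h => he (Prod.ext (h₁.trans h₂.symm) h)

lemma exists_isolates_stackRows (hA : IsDecodable A d) (hB : IsDecodable B (d / 2))
    (he : Injective e) {S : Finset (Fin n)} (hS : S.Nonempty) (hSd : S.card ≤ d) :
    ∃ ρ, Isolates (stackRows A B e ρ) S := by
  by_cases hblock : ∃ b, ∀ j ∈ S, (e j).1 = b
  · obtain ⟨b, hb⟩ := hblock
    obtain ⟨r, hr⟩ := hA.exists_isolates_comp ((injOn_snd_of_fst_eq he b).mono hb) hS hSd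
    exact ⟨.inl r, hr⟩
  · push Not at hblock
    obtain ⟨j₁, h₁⟩ := hS
    obtain ⟨j₂, h₂, hne⟩ := hblock (e j₁).1
    obtain ⟨b, hT, hTcard⟩ :=
      exists_fiber_nonempty_two_mul_card_le (f := fun j => (e j).1) h₁ h₂ (Ne.symm hne)
    have hTinj : Set.InjOn (fun j => (e j).2) (S.filter fun j => (e j).1 = b) :=
      (injOn_snd_of_fst_eq he b).mono fun j hj => (mem_filter.1 hj).2
    obtain ⟨s, hs⟩ := hB.exists_isolates_comp hTinj hT (by omega)
    exact ⟨.inr (b, s), isolates_fiber_iff.2 hs⟩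

theorem exists_isDecodable_of_le_mul (hni : n ≤ i * q) (hA : IsDecodable A d)
    (hB : IsDecodable B (d / 2)) :
    ∃ M : Fin (m₁ + i * m₂) → Fin n → Bool, IsDecodable M d := by
  let e : Fin n → Fin i × Fin q := finProdFinEquiv.symm ∘ Fin.castLE hni
  have he : Injective e := finProdFinEquiv.symm.injective.comp (Fin.castLE_injective hni)
  let σ : Fin (m₁ + i * m₂) ≃ Fin m₁ ⊕ Fin i × Fin m₂ :=
    finSumFinEquiv.symm.trans (Equiv.sumCongr (Equiv.refl _) finProdFinEquiv.symm)
  refine ⟨fun r => stackRows A B e (σ r), fun S hS hSd => ?_⟩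
  obtain ⟨ρ, hρ⟩ := exists_isolates_stackRows hA hB he hS hSd
  refine ⟨σ.symm ρ, ?_⟩
  show Isolates _ S
  simpa only [Equiv.apply_symm_apply] using hρ

end Construction

lemma exists_isDecodable_mStar (n d : ℕ) :
    ∃ M : Fin (mStar n d) → Fin n → Bool, IsDecodable M d :=
  Nat.sInf_mem (s := {m | ∃ M : Fin m → Fin n → Bool, IsDecodable M d})
    ⟨n, _, isDecodable_id n d⟩

lemma mStar_le {m n d : ℕ} {M : Fin m → Fin n → Bool} (hM : IsDecodable M d) : mStar n d ≤ m :=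
  Nat.sInf_le ⟨M, hM⟩

lemma mStar_le_add_mul {n i q d : ℕ} (hni : n ≤ i * q) :
    mStar n d ≤ mStar q d + i * mStar q (d / 2) := by
  obtain ⟨A, hA⟩ := exists_isDecodable_mStar q d
  obtain ⟨B, hB⟩ := exists_isDecodable_mStar q (d / 2)
  obtain ⟨M, hM⟩ := exists_isDecodable_of_le_mul hni hA hB
  exact mStar_le hM

theorem recursive_construction_general (n d : ℕ) :
    (∀ i m₁ m₂ : ℕ, 2 ≤ i →
      ∀ A : Fin m₁ → Fin ((n + i - 1) / i) → Bool, IsDecodable A d →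
      ∀ B : Fin m₂ → Fin ((n + i - 1) / i) → Bool, IsDecodable B (d / 2) →
        ∃ m ≤ m₁ + i * m₂, ∃ M : Fin m → Fin n → Bool, IsDecodable M d) ∧
    (∀ i : ℕ, 2 ≤ i → i ≤ (n + 1) / 2 →
      mStar n d ≤ mStar ((n + i - 1) / i) d + i * mStar ((n + i - 1) / i) (d / 2)) := by
  have le_mul_ceilDiv (i : ℕ) (hi : 2 ≤ i) : n ≤ i * ((n + i - 1) / i) :=
    (ceilDiv_le_iff_le_mul (by omega)).1 le_rfl
  refine ⟨fun i m₁ m₂ hi A hA B hB => ?_, fun i hi _ => mStar_le_add_mul (le_mul_ceilDiv i hi)⟩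
  obtain ⟨M, hM⟩ := exists_isDecodable_of_le_mul (le_mul_ceilDiv i hi) hA hB
  exact ⟨_, le_rfl, M, hM⟩

theorem recursive_construction (n d : ℕ) (hd : 3 ≤ d) (hn : 3 * (d + 1) ≤ 2 * n) :
    (∀ i m₁ m₂ : ℕ, 2 ≤ i →
      ∀ A : Fin m₁ → Fin ((n + i - 1) / i) → Bool, IsDecodable A d →
      ∀ B : Fin m₂ → Fin ((n + i - 1) / i) → Bool, IsDecodable B (d / 2) →
        ∃ m ≤ m₁ + i * m₂, ∃ M : Fin m → Fin n → Bool, IsDecodable M d) ∧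
    (∀ i : ℕ, 2 ≤ i → i ≤ (n + 1) / 2 →
      mStar n d ≤ mStar ((n + i - 1) / i) d + i * mStar ((n + i - 1) / i) (d / 2)) :=
  recursive_construction_general n d
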